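/- arXiv:2508.12128 — 2 statements merged into one kernel-verified Lean document; each statement's English description precedes it below -/
import Mathlib

section
/- Let ε₁, ε₂, ε₃, ε₄ be complex numbers with ε₁+ε₂+ε₃+ε₄ = 0 such that sh(εₐ) ≠ 0 for all a, where sh(x) = e^{x/2} − e^{−x/2}. Then the expression F(ε₁,ε₂,ε₃,ε₄) = sh(ε₁+ε₄)·sh(ε₂+ε₄)·sh(ε₃+ε₄) / (sh(ε₁)·sh(ε₂)·sh(ε₃)·sh(ε₄)) is invariant under every permutation of (ε₁,ε₂,ε₃,ε₄): for any σ ∈ S₄, F(ε_{σ(1)},ε_{σ(2)},ε_{σ(3)},ε_{σ(4)}) = F(ε₁,ε₂,ε₃,ε₄). -/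
/-- `sh x = 2 sinh(x/2) = e^{x/2} - e^{-x/2}`. -/
noncomputable def sh (x : ℂ) : ℂ := Complex.exp (x / 2) - Complex.exp (-x / 2)

/-- The magnificent four vertex weight factor
`F(ε) = sh(ε₁+ε₄) sh(ε₂+ε₄) sh(ε₃+ε₄) / (sh(ε₁) sh(ε₂) sh(ε₃) sh(ε₄))`. -/
noncomputable def MFweight (ε : Fin 4 → ℂ) : ℂ :=
  sh (ε 0 + ε 3) * sh (ε 1 + ε 3) * sh (ε 2 + ε 3) /
    (sh (ε 0) * sh (ε 1) * sh (ε 2) * sh (ε 3))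

lemma sh_neg (x : ℂ) : sh (-x) = -sh x := by
  unfold sh; ring_nf

lemma numA (a b c d : ℂ) (h : a + b + c + d = 0) :
    sh (d + a) * sh (b + a) * sh (c + a) = sh (a + d) * sh (b + d) * sh (c + d) := by
  rw [add_comm d a, show b + a = -(c + d) from by linear_combination h,
    show c + a = -(b + d) from by linear_combination h, sh_neg, sh_neg]; ring

lemma numB (a b c d : ℂ) (h : a + b + c + d = 0) :
    sh (a + b) * sh (d + b) * sh (c + b) = sh (a + d) * sh (b + d) * sh (c + d) := by
  rw [add_comm d b, show a + b = -(c + d) from by linear_combination h,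
    show c + b = -(a + d) from by linear_combination h, sh_neg, sh_neg]; ring

lemma numC (a b c d : ℂ) (h : a + b + c + d = 0) :
    sh (a + c) * sh (b + c) * sh (d + c) = sh (a + d) * sh (b + d) * sh (c + d) := by
  rw [add_comm d c, show a + c = -(b + d) from by linear_combination h,
    show b + c = -(a + d) from by linear_combination h, sh_neg, sh_neg]; ring

lemma num1 (a b c d : ℂ) (h : a + b + c + d = 0) :
    sh (d + a) * sh (a + b) * sh (a + c) = sh (d + a) * sh (d + b) * sh (d + c) := by
  rw [show a + b = -(d + c) from by linear_combination h,
    show a + c = -(d + b) from by linear_combination h, sh_neg, sh_neg]; ring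

lemma num2 (a b c d : ℂ) (h : a + b + c + d = 0) :
    sh (a + b) * sh (b + d) * sh (b + c) = sh (b + d) * sh (a + d) * sh (d + c) := by
  rw [show a + b = -(d + c) from by linear_combination h,
    show b + c = -(a + d) from by linear_combination h, sh_neg, sh_neg]; ring

lemma num3 (a b c d : ℂ) (h : a + b + c + d = 0) :
    sh (a + c) * sh (c + b) * sh (c + d) = sh (c + d) * sh (a + d) * sh (b + d) := by
  rw [show a + c = -(b + d) from by linear_combination h,
    show c + b = -(a + d) from by linear_combination h, sh_neg, sh_neg]; ring

set_option maxHeartbeats 1000000 in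
lemma MFweight_swap (ε : Fin 4 → ℂ) (hsum : ε 0 + ε 1 + ε 2 + ε 3 = 0)
    (i j : Fin 4) : MFweight (ε ∘ Equiv.swap i j) = MFweight ε := by
  fin_cases i <;> fin_cases j <;>
    simp (config := { decide := true }) only [MFweight, Function.comp_apply,
      Equiv.swap_apply_def, Fin.ext_iff, Fin.isValue,
      show ((⟨2, by norm_num⟩ : Fin 4)) = 2 from rfl,
      show ((⟨3, by norm_num⟩ : Fin 4)) = 3 from rfl] <;>
    norm_num <;>
    (first
      | ring1
      | (rw [numA (ε 0) (ε 1) (ε 2) (ε 3) hsum]; ring1)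
      | (rw [numB (ε 0) (ε 1) (ε 2) (ε 3) hsum]; ring1)
      | (rw [numC (ε 0) (ε 1) (ε 2) (ε 3) hsum]; ring1))

lemma MFweight_aux (σ : Equiv.Perm (Fin 4)) :
    ∀ ε : Fin 4 → ℂ, ε 0 + ε 1 + ε 2 + ε 3 = 0 → MFweight (ε ∘ σ) = MFweight ε := by
  refine Equiv.Perm.swap_induction_on σ (fun ε _ => by simp) ?_
  intro π i j hij ih ε hsum
  have h1 : ε ∘ (Equiv.swap i j * π) = (ε ∘ Equiv.swap i j) ∘ π := rfl
  rw [h1, ih (ε ∘ Equiv.swap i j) ?_, MFweight_swap ε hsum]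
  fin_cases i <;> fin_cases j <;>
    simp (config := { decide := true }) only [Function.comp_apply,
      Equiv.swap_apply_def, Fin.ext_iff, Fin.isValue,
      show ((⟨2, by norm_num⟩ : Fin 4)) = 2 from rfl,
      show ((⟨3, by norm_num⟩ : Fin 4)) = 3 from rfl] <;>
    norm_num <;> linear_combination hsum

/-- Quadrality: under the constraint `ε₁+ε₂+ε₃+ε₄ = 0`, the weight factor is invariant
under every permutation of `(ε₁,ε₂,ε₃,ε₄)`. -/
theorem MFweight_perm_invariant (ε : Fin 4 → ℂ)
    (hsum : ε 0 + ε 1 + ε 2 + ε 3 = 0)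
    (hne : ∀ a, sh (ε a) ≠ 0)
    (σ : Equiv.Perm (Fin 4)) :
    MFweight (ε ∘ σ) = MFweight ε :=
  MFweight_aux σ ε hsum
end

section
/- Let ε₁, ε₂, ε₃, ε₄, a, φ be complex numbers such that all sh-factors below are nonzero, where sh(t) = e^{t/2} − e^{−t/2}. Define the anti-D2 factor W(c, φ) = sh(φ−c) · ∏_{i=1}^{3} sh(φ−c+ε₄+ε_i) / [sh(φ−c+ε₄) · ∏_{i=1}^{3} sh(φ−c−ε_i)], and the D0–D0 factor Z(x,y) as the product over both orderings: Z(x,y) = [sh(x−y)·∏_{i=1}^{3}sh(x−y−ε_i−ε₄) / ∏_{b=1}^{4}sh(x−y−ε_b)] · [sh(y−x)·∏_{i=1}^{3}sh(y−x−ε_i−ε₄) / ∏_{b=1}^{4}sh(y−x−ε_b)]. Then W(a, φ) / W(a+ε₄, φ) = Z(φ, a). -/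
/-- The anti-D2 factor `Z^{anti-D2₄-D0}(c,φ)`: a semi-infinite rod of boxes in the 4-direction
starting at `c`. -/
noncomputable def antiD2 (ε₁ ε₂ ε₃ ε₄ c φ : ℂ) : ℂ :=
  sh (φ - c) * (sh (φ - c + ε₄ + ε₁) * sh (φ - c + ε₄ + ε₂) * sh (φ - c + ε₄ + ε₃)) /
    (sh (φ - c + ε₄) * (sh (φ - c - ε₁) * sh (φ - c - ε₂) * sh (φ - c - ε₃)))

/-- The D0-D0 interaction factor (product over both orderings). -/
noncomputable def ZD0D0 (ε₁ ε₂ ε₃ ε₄ x y : ℂ) : ℂ :=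
  (sh (x - y) * (sh (x - y - ε₁ - ε₄) * sh (x - y - ε₂ - ε₄) * sh (x - y - ε₃ - ε₄)) /
      (sh (x - y - ε₁) * sh (x - y - ε₂) * sh (x - y - ε₃) * sh (x - y - ε₄))) *
  (sh (y - x) * (sh (y - x - ε₁ - ε₄) * sh (y - x - ε₂ - ε₄) * sh (y - x - ε₃ - ε₄)) /
      (sh (y - x - ε₁) * sh (y - x - ε₂) * sh (y - x - ε₃) * sh (y - x - ε₄)))

/-- Shifting the rod's origin by `ε₄` removes exactly one D0-D0 box factor. -/
theorem antiD2_shift (ε₁ ε₂ ε₃ ε₄ a φ : ℂ)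
    (h0 : sh (φ - a) ≠ 0)
    (hne : ∀ c ∈ [ε₁, ε₂, ε₃, ε₄, ε₄ + ε₁, ε₄ + ε₂, ε₄ + ε₃],
      sh (φ - a + c) ≠ 0 ∧ sh (φ - a - c) ≠ 0) :
    antiD2 ε₁ ε₂ ε₃ ε₄ a φ / antiD2 ε₁ ε₂ ε₃ ε₄ (a + ε₄) φ = ZD0D0 ε₁ ε₂ ε₃ ε₄ φ a := by
  have sh_neg : ∀ x : ℂ, sh (-x) = -sh x := by
    intro x; simp [sh, neg_div]
  obtain ⟨p1, m1⟩ := hne ε₁ (by simp)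
  obtain ⟨p2, m2⟩ := hne ε₂ (by simp)
  obtain ⟨p3, m3⟩ := hne ε₃ (by simp)
  obtain ⟨p4, m4⟩ := hne ε₄ (by simp)
  obtain ⟨p41, m41⟩ := hne (ε₄ + ε₁) (by simp)
  obtain ⟨p42, m42⟩ := hne (ε₄ + ε₂) (by simp)
  obtain ⟨p43, m43⟩ := hne (ε₄ + ε₃) (by simp)
  unfold antiD2 ZD0D0
  rw [show a - φ - ε₁ - ε₄ = -(φ - a + (ε₄ + ε₁)) by ring,
      show a - φ - ε₂ - ε₄ = -(φ - a + (ε₄ + ε₂)) by ring,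
      show a - φ - ε₃ - ε₄ = -(φ - a + (ε₄ + ε₃)) by ring,
      show a - φ - ε₁ = -(φ - a + ε₁) by ring,
      show a - φ - ε₂ = -(φ - a + ε₂) by ring,
      show a - φ - ε₃ = -(φ - a + ε₃) by ring,
      show a - φ - ε₄ = -(φ - a + ε₄) by ring,
      show a - φ = -(φ - a) by ring,
      show φ - (a + ε₄) = φ - a - ε₄ by ring,
      show φ - a - ε₄ + ε₄ + ε₁ = φ - a + ε₁ by ring,
      show φ - a - ε₄ + ε₄ + ε₂ = φ - a + ε₂ by ring,
      show φ - a - ε₄ + ε₄ + ε₃ = φ - a + ε₃ by ring,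
      show φ - a - ε₄ + ε₄ = φ - a by ring,
      show φ - a - ε₄ - ε₁ = φ - a - (ε₄ + ε₁) by ring,
      show φ - a - ε₄ - ε₂ = φ - a - (ε₄ + ε₂) by ring,
      show φ - a - ε₄ - ε₃ = φ - a - (ε₄ + ε₃) by ring,
      show φ - a + ε₄ + ε₁ = φ - a + (ε₄ + ε₁) by ring,
      show φ - a + ε₄ + ε₂ = φ - a + (ε₄ + ε₂) by ring,
      show φ - a + ε₄ + ε₃ = φ - a + (ε₄ + ε₃) by ring,
      show φ - a - ε₁ - ε₄ = φ - a - (ε₄ + ε₁) by ring,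
      show φ - a - ε₂ - ε₄ = φ - a - (ε₄ + ε₂) by ring,
      show φ - a - ε₃ - ε₄ = φ - a - (ε₄ + ε₃) by ring]
  simp only [sh_neg]
  field_simp
end
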